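/- Let 𝒱 be an infinite set, let 𝒩 be the set of all symmetric, identity-respecting, positive, triangle-inequality-respecting distance operators on 𝒫(𝒱), and let 𝒪 be any set of distance operators on 𝒫(𝒱) with 𝒩 ⊆ 𝒪. Then there does not exist a normal characterization of 𝒪. -/

import Mathlib

/-- `lt` is a strict total order on `C`. -/
def StrictTotalOrder' {C : Type*} (lt : C → C → Prop) : Prop :=
  (∀ c, ¬ lt c c) ∧ (∀ a b c, lt a b → lt b c → lt a c) ∧
  (∀ a b, a ≠ b → lt a b ∨ lt b a)

/-- The operator induced by a pseudo-distance `⟨C, lt, d⟩`: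
`V |_D W = {w ∈ W : ∃ v ∈ V, ∀ v' ∈ V, ∀ w' ∈ W, d(v,w) ⪯ d(v',w')}`. -/
def inducedOp {𝒱 C : Type*} (lt : C → C → Prop) (d : 𝒱 → 𝒱 → C)
    (A B : Set 𝒱) : Set 𝒱 :=
  {w ∈ B | ∃ v ∈ A, ∀ v' ∈ A, ∀ w' ∈ B, lt (d v w) (d v' w') ∨ d v w = d v' w'}

/-- `op` is a distance operator: it is induced by some pseudo-distance. -/
def IsDistanceOp {𝒱 : Type*} (op : Set 𝒱 → Set 𝒱 → Set 𝒱) : Prop :=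
  ∃ (C : Type*) (lt : C → C → Prop) (d : 𝒱 → 𝒱 → C),
    Nonempty C ∧ StrictTotalOrder' lt ∧ op = inducedOp lt d

/-- `op` is a symmetric, identity-respecting, positive, triangle-inequality-respecting
distance operator (costs are the reals with the usual strict order). -/
def IsNiceDistanceOp {𝒱 : Type*} (op : Set 𝒱 → Set 𝒱 → Set 𝒱) : Prop :=
  ∃ d : 𝒱 → 𝒱 → ℝ,
    (∀ v w, d v w = d w v) ∧
    (∀ v w, d v w = 0 ↔ v = w) ∧
    (∀ v w, 0 ≤ d v w) ∧
    (∀ v w x, d v x ≤ d v w + d w x) ∧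
    op = inducedOp (· < ·) d

/-- There exists a normal characterization of `O`: a pair `⟨n, Φ⟩`, `n` a positive natural
number and `Φ` a relation on `𝒫(𝒱)^(3n)`, such that for every binary operator `op` on `𝒫(𝒱)`:
`op ∈ O` iff for all `V₁,…,Vₙ,W₁,…,Wₙ ⊆ 𝒱`,
`(V₁,…,Vₙ,W₁,…,Wₙ,V₁|W₁,…,Vₙ|Wₙ) ∈ Φ`. -/
def HasNormalCharacterization {𝒱 : Type*} (O : Set (Set 𝒱 → Set 𝒱 → Set 𝒱)) : Prop :=
  ∃ (n : ℕ), 0 < n ∧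
    ∃ Φ : (Fin n → Set 𝒱) → (Fin n → Set 𝒱) → (Fin n → Set 𝒱) → Prop,
      ∀ op : Set 𝒱 → Set 𝒱 → Set 𝒱,
        op ∈ O ↔ ∀ Vs Ws : Fin n → Set 𝒱, Φ Vs Ws (fun i => op (Vs i) (Ws i))

/-!
A normal characterization inspects only finitely many values of an operator at a time.
Fix distinct points `x 0, x 1, …` and a point `a` off them. The metrics
`d_M(u, v) = c_M(u) + c_M(v)` (`u ≠ v`) are symmetric, identity respecting, positive and
triangle-inequality respecting, and each value `V |_{d_M} W` is eventually constant in `M`.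
The limit operator has `{a} | {x m, x (m+1)} = {x m}`, which forces
`d(a, x 0) ≺ d(a, x 1) ≺ ⋯` for any pseudo-distance inducing it, yet `{a} | {x 0, x 1, …} = ∅`.
So it is not a distance operator, although any `n` of its values are those of some `d_M`.
-/

open Set Filter Function

section

variable {𝒱 : Type*}

theorem HasNormalCharacterization.mem_of_eventually_eq {O : Set (Set 𝒱 → Set 𝒱 → Set 𝒱)}
    (hO : HasNormalCharacterization O) {ι : Type*} {l : Filter ι} [l.NeBot]
    {ops : ι → Set 𝒱 → Set 𝒱 → Set 𝒱} (hops : ∀ i, ops i ∈ O) {op : Set 𝒱 → Set 𝒱 → Set 𝒱}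
    (hlim : ∀ V W, ∀ᶠ i in l, ops i V W = op V W) : op ∈ O := by
  obtain ⟨n, -, Φ, hΦ⟩ := hO
  refine (hΦ op).2 fun Vs Ws => ?_
  obtain ⟨i, hi⟩ := (eventually_all.2 fun k => hlim (Vs k) (Ws k)).exists
  simpa only [hi] using (hΦ (ops i)).1 (hops i) Vs Ws

section StrictTotalOrder

variable {C : Type*} {lt : C → C → Prop} {d : 𝒱 → 𝒱 → C}

theorem mem_inducedOp_singleton {a w : 𝒱} {W : Set 𝒱} :
    w ∈ inducedOp lt d {a} W ↔ w ∈ W ∧ ∀ w' ∈ W, lt (d a w) (d a w') ∨ d a w = d a w' := by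
  simp [inducedOp]

theorem not_isDistanceOp_of_singleton_pair_range {op : Set 𝒱 → Set 𝒱 → Set 𝒱} {a : 𝒱} {x : ℕ → 𝒱}
    (hx : ∀ m, x (m + 1) ≠ x m) (hpair : ∀ m, op {a} {x m, x (m + 1)} = {x m})
    (hrange : op {a} (range x) = ∅) : ¬ IsDistanceOp op := by
  rintro ⟨C, lt, d, -, ⟨-, htrans, htotal⟩, rfl⟩
  have hstep : ∀ m, lt (d a (x m)) (d a (x (m + 1))) := by
    intro m
    by_contra hlt
    have hmem : x (m + 1) ∈ inducedOp lt d {a} {x m, x (m + 1)} := by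
      refine mem_inducedOp_singleton.2 ⟨mem_insert_of_mem _ rfl, ?_⟩
      rintro w' (rfl | rfl)
      · by_cases heq : d a (x (m + 1)) = d a (x m)
        · exact .inr heq
        · exact .inl ((htotal _ _ heq).resolve_right hlt)
      · exact .inr rfl
    rw [hpair m, mem_singleton_iff] at hmem
    exact hx m hmem
  have hchain : ∀ j, lt (d a (x 0)) (d a (x (j + 1))) := by
    intro j
    induction j with
    | zero => exact hstep 0
    | succ k ih => exact htrans _ _ _ ih (hstep (k + 1))
  have hmem : x 0 ∈ inducedOp lt d {a} (range x) := by
    refine mem_inducedOp_singleton.2 ⟨mem_range_self 0, ?_⟩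
    rintro _ ⟨_ | k, rfl⟩
    exacts [.inr rfl, .inl (hchain k)]
  rw [hrange] at hmem
  exact hmem

end StrictTotalOrder

theorem mem_inducedOp_lt {d : 𝒱 → 𝒱 → ℝ} {V W : Set 𝒱} {w : 𝒱} :
    w ∈ inducedOp (· < ·) d V W ↔ w ∈ W ∧ ∃ v ∈ V, ∀ v' ∈ V, ∀ w' ∈ W, d v w ≤ d v' w' := by
  simp only [inducedOp, ← le_iff_lt_or_eq, mem_ofPred_eq]

theorem inducedOp_eq_inter {d : 𝒱 → 𝒱 → ℝ} (hd₀ : ∀ v w, d v w = 0 ↔ v = w)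
    (hd : ∀ v w, 0 ≤ d v w) {V W : Set 𝒱} (hVW : (V ∩ W).Nonempty) :
    inducedOp (· < ·) d V W = V ∩ W := by
  obtain ⟨u, huV, huW⟩ := hVW
  ext w
  rw [mem_inducedOp_lt]
  constructor
  · rintro ⟨hw, v, hv, hmin⟩
    have hvw : v = w :=
      (hd₀ v w).1 ((hmin u huV u huW).trans_eq ((hd₀ u u).2 rfl) |>.antisymm (hd v w))
    exact ⟨hvw ▸ hv, hw⟩
  · rintro ⟨hwV, hwW⟩
    exact ⟨hwW, w, hwV, fun v' _ w' _ => ((hd₀ w w).2 rfl).symm ▸ hd v' w'⟩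

open Classical in
noncomputable def sumDist (c : 𝒱 → ℝ) (u v : 𝒱) : ℝ := if u = v then 0 else c u + c v

def minimizers (c : 𝒱 → ℝ) (W : Set 𝒱) : Set 𝒱 := {w ∈ W | IsMinOn c W w}

open Classical in
noncomputable def minimizerOp (μ : Set 𝒱 → Set 𝒱) (V W : Set 𝒱) : Set 𝒱 :=
  if (V ∩ W).Nonempty then V ∩ W else if (μ V).Nonempty then μ W else ∅

section SumDist

variable {c : 𝒱 → ℝ}

theorem sumDist_of_ne {u v : 𝒱} (h : u ≠ v) : sumDist c u v = c u + c v := if_neg h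

theorem sumDist_eq_zero_iff (hc : ∀ v, 0 < c v) {u v : 𝒱} : sumDist c u v = 0 ↔ u = v := by
  by_cases h : u = v
  · simp [h, sumDist]
  · simp only [sumDist_of_ne h, h, iff_false]
    exact (add_pos (hc u) (hc v)).ne'

theorem sumDist_nonneg (hc : ∀ v, 0 < c v) (u v : 𝒱) : 0 ≤ sumDist c u v := by
  unfold sumDist
  split_ifs
  exacts [le_rfl, add_nonneg (hc u).le (hc v).le]

theorem isNiceDistanceOp_sumDist (hc : ∀ v, 0 < c v) :
    IsNiceDistanceOp (inducedOp (· < ·) (sumDist c)) := by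
  refine ⟨sumDist c, fun u v => ?_, fun u v => sumDist_eq_zero_iff hc,
    sumDist_nonneg hc, fun u v w => ?_, rfl⟩
  · by_cases h : u = v
    · rw [h]
    · rw [sumDist_of_ne h, sumDist_of_ne (Ne.symm h), add_comm]
  · by_cases huw : u = w
    · rw [huw, (sumDist_eq_zero_iff hc).2 rfl]
      exact add_nonneg (sumDist_nonneg hc w v) (sumDist_nonneg hc v w)
    by_cases huv : u = v
    · rw [huv, (sumDist_eq_zero_iff hc).2 rfl, zero_add]
    by_cases hvw : v = w
    · rw [hvw, (sumDist_eq_zero_iff hc).2 rfl, add_zero]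
    rw [sumDist_of_ne huw, sumDist_of_ne huv, sumDist_of_ne hvw]
    linarith [hc v]

theorem mem_inducedOp_sumDist_of_not_nonempty {V W : Set 𝒱} (hVW : ¬ (V ∩ W).Nonempty)
    {w : 𝒱} : w ∈ inducedOp (· < ·) (sumDist c) V W ↔
      (minimizers c V).Nonempty ∧ w ∈ minimizers c W := by
  have hsum : ∀ v ∈ V, ∀ w ∈ W, sumDist c v w = c v + c w := fun v hv w hw =>
    sumDist_of_ne fun h => hVW ⟨v, hv, h ▸ hw⟩
  rw [mem_inducedOp_lt]
  constructor
  · rintro ⟨hw, v, hv, hmin⟩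
    have hle : ∀ v' ∈ V, ∀ w' ∈ W, c v + c w ≤ c v' + c w' := fun v' hv' w' hw' => by
      simpa only [hsum _ hv _ hw, hsum _ hv' _ hw'] using hmin v' hv' w' hw'
    exact ⟨⟨v, hv, fun v' hv' => by simpa using hle v' hv' w hw⟩,
      hw, fun w' hw' => by simpa using hle v hv w' hw'⟩
  · rintro ⟨⟨v, hv, hvmin⟩, hw, hwmin⟩
    refine ⟨hw, v, hv, fun v' hv' w' hw' => ?_⟩
    rw [hsum _ hv _ hw, hsum _ hv' _ hw']
    exact add_le_add (hvmin hv') (hwmin hw')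

theorem inducedOp_sumDist (hc : ∀ v, 0 < c v) (V W : Set 𝒱) :
    inducedOp (· < ·) (sumDist c) V W = minimizerOp (minimizers c) V W := by
  unfold minimizerOp
  split_ifs with hVW hV
  · exact inducedOp_eq_inter (fun _ _ => sumDist_eq_zero_iff hc) (sumDist_nonneg hc) hVW
  all_goals ext w; simp [mem_inducedOp_sumDist_of_not_nonempty hVW, hV]

end SumDist

theorem eventually_minimizerOp_eq {ι : Type*} {l : Filter ι} {μs : ι → Set 𝒱 → Set 𝒱}
    {μ : Set 𝒱 → Set 𝒱} (h : ∀ W, ∀ᶠ i in l, μs i W = μ W) (V W : Set 𝒱) :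
    ∀ᶠ i in l, minimizerOp (μs i) V W = minimizerOp μ V W := by
  filter_upwards [h V, h W] with i hV hW
  rw [minimizerOp, minimizerOp, hV, hW]

/-- Once `M` bounds a finite nonempty set of indices, its least element is the unique minimizer;
an infinite set of indices has no minimizer. -/
noncomputable def seqCost (M m : ℕ) : ℝ := if m ≤ M then 2 - ((m : ℝ) + 1)⁻¹ else ((m : ℝ) + 1)⁻¹

section SeqCost

variable {M m m' : ℕ}

theorem inv_nat_succ_le_one (m : ℕ) : ((m : ℝ) + 1)⁻¹ ≤ 1 :=
  inv_le_one_of_one_le₀ (by linarith [(Nat.cast_nonneg m : (0 : ℝ) ≤ m)])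

theorem seqCost_pos : 0 < seqCost M m := by
  unfold seqCost
  split_ifs
  · linarith [inv_nat_succ_le_one m]
  · positivity

theorem seqCost_lt_two : seqCost M m < 2 := by
  unfold seqCost
  split_ifs
  · linarith [(by positivity : (0 : ℝ) < ((m : ℝ) + 1)⁻¹)]
  · linarith [inv_nat_succ_le_one m]

theorem seqCost_lt_of_lt_of_le (hmm' : m < m') (hm' : m' ≤ M) : seqCost M m < seqCost M m' := by
  rw [seqCost, seqCost, if_pos (hmm'.le.trans hm'), if_pos hm']
  have : ((m' : ℝ) + 1)⁻¹ < ((m : ℝ) + 1)⁻¹ := by gcongr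
  linarith

theorem seqCost_lt_of_lt_of_lt (hmm' : m < m') (hM : M < m') : seqCost M m' < seqCost M m := by
  rw [seqCost, if_neg hM.not_ge, seqCost]
  have hm'1 : (1 : ℝ) ≤ m' := by exact_mod_cast (Nat.zero_le M).trans_lt hM
  have hhalf : ((m' : ℝ) + 1)⁻¹ ≤ 2⁻¹ := by gcongr; linarith
  split_ifs
  · linarith [inv_nat_succ_le_one m]
  · gcongr

end SeqCost

open Classical in
noncomputable def cost (x : ℕ → 𝒱) (M : ℕ) (v : 𝒱) : ℝ :=
  if v ∈ range x then seqCost M (invFun x v) else 2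

open Classical in
noncomputable def limitMinimizers (x : ℕ → 𝒱) (W : Set 𝒱) : Set 𝒱 :=
  if (x ⁻¹' W).Infinite then ∅ else if (x ⁻¹' W).Nonempty then {x (sInf (x ⁻¹' W))} else W

section Cost

variable {x : ℕ → 𝒱} {M : ℕ} {W : Set 𝒱}

theorem cost_apply (hx : Injective x) (m : ℕ) : cost x M (x m) = seqCost M m := by
  rw [cost, if_pos (mem_range_self m), leftInverse_invFun hx m]

theorem cost_of_notMem {v : 𝒱} (hv : v ∉ range x) : cost x M v = 2 := if_neg hv

theorem cost_pos (hx : Injective x) (v : 𝒱) : 0 < cost x M v := by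
  by_cases hv : v ∈ range x
  · obtain ⟨m, rfl⟩ := hv
    rw [cost_apply hx]
    exact seqCost_pos
  · rw [cost_of_notMem hv]
    norm_num

theorem minimizers_cost_of_infinite (hx : Injective x) (hW : (x ⁻¹' W).Infinite) :
    minimizers (cost x M) W = ∅ := by
  refine eq_empty_of_forall_notMem fun w ⟨_, hmin⟩ => ?_
  have hbelow : ∀ j, ∃ m ∈ x ⁻¹' W, cost x M (x m) < seqCost M j := fun j => by
    obtain ⟨m, hm, hlt⟩ := hW.exists_gt (max M j)
    rw [max_lt_iff] at hlt
    exact ⟨m, hm, (cost_apply hx m).symm ▸ seqCost_lt_of_lt_of_lt hlt.2 hlt.1⟩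
  by_cases hw : w ∈ range x
  · obtain ⟨j, rfl⟩ := hw
    obtain ⟨m, hm, hlt⟩ := hbelow j
    exact (isMinOn_iff.1 hmin _ hm).not_gt (by rw [cost_apply hx j]; exact hlt)
  · obtain ⟨m, hm, hlt⟩ := hbelow 0
    exact (isMinOn_iff.1 hmin _ hm).not_gt
      (by rw [cost_of_notMem hw]; exact hlt.trans seqCost_lt_two)

theorem minimizers_cost_of_bounded (hx : Injective x) (hM : ∀ m ∈ x ⁻¹' W, m ≤ M)
    (hne : (x ⁻¹' W).Nonempty) : minimizers (cost x M) W = {x (sInf (x ⁻¹' W))} := by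
  set m₀ := sInf (x ⁻¹' W)
  have hm₀ : x m₀ ∈ W := Nat.sInf_mem hne
  have hle : ∀ w ∈ W, w ≠ x m₀ → cost x M (x m₀) < cost x M w := by
    intro w hw hne
    rw [cost_apply hx]
    by_cases hwr : w ∈ range x
    · obtain ⟨j, rfl⟩ := hwr
      rw [cost_apply hx]
      exact seqCost_lt_of_lt_of_le ((Nat.sInf_le hw).lt_of_ne fun h => hne (h ▸ rfl)) (hM j hw)
    · rw [cost_of_notMem hwr]
      exact seqCost_lt_two
  ext w
  refine ⟨fun ⟨hw, hmin⟩ => ?_, ?_⟩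
  · by_contra hne
    exact (isMinOn_iff.1 hmin _ hm₀).not_gt (hle w hw hne)
  · rintro rfl
    refine ⟨hm₀, isMinOn_iff.2 fun w hw => ?_⟩
    rcases eq_or_ne w (x m₀) with rfl | hne
    exacts [le_rfl, (hle w hw hne).le]

theorem minimizers_cost_of_preimage_empty (hW : x ⁻¹' W = ∅) : minimizers (cost x M) W = W := by
  have h2 : ∀ w ∈ W, cost x M w = 2 := fun w hw => cost_of_notMem fun ⟨m, hm⟩ =>
    (eq_empty_iff_forall_notMem.1 hW) m (by rwa [mem_preimage, hm])
  ext w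
  exact ⟨And.left, fun hw =>
    ⟨hw, isMinOn_iff.2 fun w' hw' => ((h2 w hw).trans (h2 w' hw').symm).le⟩⟩

theorem eventually_minimizers_cost_eq (hx : Injective x) (W : Set 𝒱) :
    ∀ᶠ M in atTop, minimizers (cost x M) W = limitMinimizers x W := by
  by_cases hinf : (x ⁻¹' W).Infinite
  · refine Eventually.of_forall fun M => ?_
    rw [limitMinimizers, if_pos hinf, minimizers_cost_of_infinite hx hinf]
  obtain ⟨N, hN⟩ := (Set.not_infinite.1 hinf).bddAbove
  filter_upwards [eventually_ge_atTop N] with M hM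
  rw [limitMinimizers, if_neg hinf]
  split_ifs with hne
  · exact minimizers_cost_of_bounded hx (fun m hm => (hN hm).trans hM) hne
  · exact minimizers_cost_of_preimage_empty (not_nonempty_iff_eq_empty.1 hne)

end Cost

section LimitMinimizers

variable {x : ℕ → 𝒱}

theorem limitMinimizers_singleton_of_notMem {a : 𝒱} (ha : a ∉ range x) :
    limitMinimizers x {a} = {a} := by
  have h : x ⁻¹' {a} = ∅ := eq_empty_of_forall_notMem fun m hm => ha ⟨m, hm⟩
  simp [limitMinimizers, h]

theorem limitMinimizers_pair (hx : Injective x) (m : ℕ) :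
    limitMinimizers x {x m, x (m + 1)} = {x m} := by
  have h : x ⁻¹' {x m, x (m + 1)} = {m, m + 1} := by
    ext j
    simp [hx.eq_iff]
  simp [limitMinimizers, h]

theorem limitMinimizers_range : limitMinimizers x (range x) = ∅ := by
  simp [limitMinimizers, infinite_univ]

end LimitMinimizers

theorem not_isDistanceOp_minimizerOp_limitMinimizers {x : ℕ → 𝒱} {a : 𝒱} (hx : Injective x)
    (ha : a ∉ range x) : ¬ IsDistanceOp (minimizerOp (limitMinimizers x)) := by
  have hdisj : ∀ W ⊆ range x, ¬ ({a} ∩ W).Nonempty := fun W hW ⟨_, rfl, haW⟩ => ha (hW haW)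
  refine not_isDistanceOp_of_singleton_pair_range (a := a) (fun m h => Nat.succ_ne_self m (hx h))
    (fun m => ?_) ?_
  · rw [minimizerOp, if_neg (hdisj _ (insert_subset (mem_range_self m)
      (singleton_subset_iff.2 (mem_range_self (m + 1))))), limitMinimizers_singleton_of_notMem ha,
      if_pos (singleton_nonempty a), limitMinimizers_pair hx]
  · rw [minimizerOp, if_neg (hdisj _ subset_rfl), limitMinimizers_range, ite_self]

end

theorem stmt0 {𝒱 : Type*} [Infinite 𝒱]
    (O : Set (Set 𝒱 → Set 𝒱 → Set 𝒱))
    (hO : ∀ op ∈ O, IsDistanceOp op)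
    (hN : ∀ op, IsNiceDistanceOp op → op ∈ O) :
    ¬ HasNormalCharacterization O := by
  intro hchar
  set e := Infinite.natEmbedding 𝒱
  have hx : Injective (e ∘ Nat.succ) := e.injective.comp Nat.succ_injective
  have ha : e 0 ∉ range (e ∘ Nat.succ) := fun ⟨m, hm⟩ => Nat.succ_ne_zero m (e.injective hm)
  have hlim : minimizerOp (limitMinimizers (e ∘ Nat.succ)) ∈ O := by
    refine hchar.mem_of_eventually_eq (l := atTop)
      (fun M => hN _ (isNiceDistanceOp_sumDist (cost_pos hx (M := M)))) fun V W => ?_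
    simpa only [inducedOp_sumDist (cost_pos hx)] using
      eventually_minimizerOp_eq (eventually_minimizers_cost_eq hx) V W
  exact not_isDistanceOp_minimizerOp_limitMinimizers hx ha (hO _ hlim)
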